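/- Let (α,β) ∈ G_p := {α > 0, β ≥ 0, α(p−1) > β}, with 1+2/N < p < N/(N−2). Then the minimization value m_{α,β} := inf{ S(u) : u ∈ H, u ≠ 0, K_{α,β}(u) = 0 } equals inf{ H_{α,β}(u) : u ∈ H, u ≠ 0, K_{α,β}(u) ≤ 0 }, where H_{α,β}(u) = S(u) − K_{α,β}(u)/(2α+(N+2)β). -/

import Mathlib

open MeasureTheory

/-- Membership of an `m`-tuple in the energy space `H = Σ^m` (with enough
regularity for the variational analysis). -/
def InH (N m : ℕ) (p : ℝ) (u : Fin m → EuclideanSpace ℝ (Fin N) → ℂ) : Prop :=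
  (∀ j, Differentiable ℝ (u j)) ∧
  (∀ j, Integrable (fun x => ‖u j x‖^2)) ∧
  (∀ j, Integrable (fun x => ‖x‖^2 * ‖u j x‖^2)) ∧
  (∀ j, Integrable (fun x => ‖fderiv ℝ (u j) x‖^2)) ∧
  (∀ j k, Integrable (fun x => (‖u j x‖ * ‖u k x‖) ^ p))

/-- The action functional `S(u)`. -/
noncomputable def Sfun (N m : ℕ) (p : ℝ) (a : Fin m → Fin m → ℝ)
    (u : Fin m → EuclideanSpace ℝ (Fin N) → ℂ) : ℝ :=
  (1/2) * (∑ j, ((∫ x, ‖u j x‖^2) + (∫ x, ‖x‖^2 * ‖u j x‖^2)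
      + (∫ x, ‖fderiv ℝ (u j) x‖^2)))
    - (1/(2*p)) * ∑ j, ∑ k, a j k * ∫ x, (‖u j x‖ * ‖u k x‖) ^ p

/-- The constraint functional `K_{α,β}(u)`. -/
noncomputable def Kfun (N m : ℕ) (p α β : ℝ) (a : Fin m → Fin m → ℝ)
    (u : Fin m → EuclideanSpace ℝ (Fin N) → ℂ) : ℝ :=
  (1/2) * (∑ j, ((2*α + ((N:ℝ) - 2)*β) * (∫ x, ‖fderiv ℝ (u j) x‖^2)
      + (2*α + (N:ℝ)*β) * (∫ x, ‖u j x‖^2)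
      + (2*α + ((N:ℝ) + 2)*β) * (∫ x, ‖x‖^2 * ‖u j x‖^2)))
    - (2*p*α + (N:ℝ)*β)/(2*p) * ∑ j, ∑ k, a j k * ∫ x, (‖u j x‖ * ‖u k x‖) ^ p

/-- `H_{α,β} = S − K_{α,β}/(2α+(N+2)β)`. -/
noncomputable def Hfun (N m : ℕ) (p α β : ℝ) (a : Fin m → Fin m → ℝ)
    (u : Fin m → EuclideanSpace ℝ (Fin N) → ℂ) : ℝ :=
  Sfun N m p a u - Kfun N m p α β a u / (2*α + ((N:ℝ) + 2)*β)

/-!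
Along the ray `t ↦ t • u` the mass, potential and kinetic energies scale like `t²` and the
interaction energy `P` like `(t²)ᵖ`. Eliminating the potential energy,
`H_{α,β}(u) = (β (2‖∇u‖² + ‖u‖²) + (α (p - 1) - β) / p · P(u)) / (2α + (N + 2)β)`,
which is nondecreasing in `t²` as soon as `β ≤ α (p - 1)`. If `u ≠ 0` and `K(u) ≤ 0`, the quadratic
part `Q(u) > 0` of `K` forces `P(u) > 0`, and `K(t • u) = t² Q(u) - c (t²)ᵖ P(u)` vanishes for some
`t² ∈ (0, 1]`, where `S(t • u) = H(t • u) ≤ H(u)`. As `S = H` on `{K = 0}`, the two sets of values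
are empty, or unbounded below, together, so their `sInf`s agree also in those junk cases.
-/

namespace CoupledNLS

variable {N m : ℕ}

noncomputable def mass (u : Fin m → EuclideanSpace ℝ (Fin N) → ℂ) : ℝ :=
  ∑ j, ∫ x, ‖u j x‖ ^ 2

noncomputable def potentialEnergy (u : Fin m → EuclideanSpace ℝ (Fin N) → ℂ) : ℝ :=
  ∑ j, ∫ x, ‖x‖ ^ 2 * ‖u j x‖ ^ 2

noncomputable def kineticEnergy (u : Fin m → EuclideanSpace ℝ (Fin N) → ℂ) : ℝ :=
  ∑ j, ∫ x, ‖fderiv ℝ (u j) x‖ ^ 2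

noncomputable def interactionEnergy (p : ℝ) (a : Fin m → Fin m → ℝ)
    (u : Fin m → EuclideanSpace ℝ (Fin N) → ℂ) : ℝ :=
  ∑ j, ∑ k, a j k * ∫ x, (‖u j x‖ * ‖u k x‖) ^ p

noncomputable def Kquad (α β : ℝ) (u : Fin m → EuclideanSpace ℝ (Fin N) → ℂ) : ℝ :=
  ((2*α + ((N:ℝ) - 2)*β) * kineticEnergy u + (2*α + (N:ℝ)*β) * mass u
    + (2*α + ((N:ℝ) + 2)*β) * potentialEnergy u) / 2

variable {p α β : ℝ} {a : Fin m → Fin m → ℝ} {u : Fin m → EuclideanSpace ℝ (Fin N) → ℂ}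

lemma mass_nonneg : 0 ≤ mass u :=
  Finset.sum_nonneg fun _ _ => integral_nonneg fun _ => by positivity

lemma potentialEnergy_nonneg : 0 ≤ potentialEnergy u :=
  Finset.sum_nonneg fun _ _ => integral_nonneg fun _ => by positivity

lemma kineticEnergy_nonneg : 0 ≤ kineticEnergy u :=
  Finset.sum_nonneg fun _ _ => integral_nonneg fun _ => by positivity

lemma Sfun_eq :
    Sfun N m p a u = (mass u + potentialEnergy u + kineticEnergy u) / 2
      - interactionEnergy p a u / (2 * p) := by
  simp only [Sfun, mass, potentialEnergy, kineticEnergy, interactionEnergy,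
    Finset.sum_add_distrib]
  ring

lemma Kfun_eq :
    Kfun N m p α β a u = Kquad α β u - (2*p*α + (N:ℝ)*β) / (2*p) * interactionEnergy p a u := by
  simp only [Kfun, Kquad, mass, potentialEnergy, kineticEnergy, interactionEnergy,
    Finset.sum_add_distrib, ← Finset.mul_sum]
  ring

lemma Hfun_eq (hp : p ≠ 0) (hD : 2*α + ((N:ℝ) + 2)*β ≠ 0) :
    Hfun N m p α β a u = (β * (2 * kineticEnergy u + mass u)
      + (α * (p - 1) - β) / p * interactionEnergy p a u) / (2*α + ((N:ℝ) + 2)*β) := by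
  rw [Hfun, eq_div_iff hD, sub_mul, div_mul_cancel₀ _ hD, Sfun_eq, Kfun_eq, Kquad]
  field_simp
  ring

lemma Hfun_eq_Sfun_of_Kfun_eq_zero (hK : Kfun N m p α β a u = 0) :
    Hfun N m p α β a u = Sfun N m p a u := by
  simp [Hfun, hK]

lemma norm_real_smul_sq {E : Type*} [SeminormedAddCommGroup E] [SMul ℝ E] [NormSMulClass ℝ E]
    (t : ℝ) (z : E) :
    ‖t • z‖ ^ 2 = t ^ 2 * ‖z‖ ^ 2 := by
  rw [norm_smul, mul_pow, Real.norm_eq_abs, sq_abs]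

lemma norm_real_smul_mul_norm_real_smul_rpow {E : Type*} [SeminormedAddCommGroup E] [SMul ℝ E]
    [NormSMulClass ℝ E] (t : ℝ) (z w : E) (p : ℝ) :
    (‖t • z‖ * ‖t • w‖) ^ p = (t ^ 2) ^ p * (‖z‖ * ‖w‖) ^ p := by
  rw [← Real.mul_rpow (sq_nonneg t) (by positivity), norm_smul, norm_smul, Real.norm_eq_abs,
    mul_mul_mul_comm, abs_mul_abs_self, sq]

lemma mass_smul (t : ℝ) : mass (t • u) = t ^ 2 * mass u := by
  simp only [mass, Pi.smul_apply, norm_real_smul_sq, integral_const_mul, Finset.mul_sum]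

lemma potentialEnergy_smul (t : ℝ) : potentialEnergy (t • u) = t ^ 2 * potentialEnergy u := by
  simp only [potentialEnergy, Pi.smul_apply, norm_real_smul_sq, mul_left_comm _ (t ^ 2),
    integral_const_mul, Finset.mul_sum]

lemma kineticEnergy_smul (t : ℝ) : kineticEnergy (t • u) = t ^ 2 * kineticEnergy u := by
  simp only [kineticEnergy, Pi.smul_apply, fderiv_const_smul_field, norm_real_smul_sq,
    integral_const_mul, Finset.mul_sum]

lemma interactionEnergy_smul (t : ℝ) :
    interactionEnergy p a (t • u) = (t ^ 2) ^ p * interactionEnergy p a u := by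
  simp only [interactionEnergy, Pi.smul_apply, norm_real_smul_mul_norm_real_smul_rpow,
    integral_const_mul, Finset.mul_sum, mul_left_comm _ ((t ^ 2) ^ p)]

lemma InH.smul (hu : InH N m p u) (t : ℝ) : InH N m p (t • u) := by
  obtain ⟨hdiff, hmass, hpot, hkin, hint⟩ := hu
  refine ⟨fun j => (hdiff j).const_smul t, fun j => ?_, fun j => ?_, fun j => ?_, fun j k => ?_⟩
  · simpa only [Pi.smul_apply, norm_real_smul_sq] using (hmass j).const_mul (t ^ 2)
  · simpa only [Pi.smul_apply, norm_real_smul_sq, mul_left_comm _ (t ^ 2)]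
      using (hpot j).const_mul (t ^ 2)
  · simpa only [Pi.smul_apply, fderiv_const_smul_field, norm_real_smul_sq]
      using (hkin j).const_mul (t ^ 2)
  · simpa only [Pi.smul_apply, norm_real_smul_mul_norm_real_smul_rpow]
      using (hint j k).const_mul ((t ^ 2) ^ p)

lemma Kquad_smul (t : ℝ) : Kquad α β (t • u) = t ^ 2 * Kquad α β u := by
  rw [Kquad, Kquad, mass_smul, potentialEnergy_smul, kineticEnergy_smul]
  ring

lemma mass_pos (hu : InH N m p u) (hne : u ≠ 0) : 0 < mass u := by
  obtain ⟨j, hj⟩ := Function.ne_iff.mp hne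
  obtain ⟨x, hx⟩ := Function.ne_iff.mp hj
  have hpos : 0 < ∫ x, ‖u j x‖ ^ 2 :=
    integral_pos_of_integrable_nonneg_nonzero (x := x) ((hu.1 j).continuous.norm.pow 2)
      (hu.2.1 j) (fun _ => by positivity) (by simpa using hx)
  exact hpos.trans_le <| Finset.single_le_sum (f := fun k => ∫ x, ‖u k x‖ ^ 2)
    (fun k _ => integral_nonneg fun _ => by positivity) (Finset.mem_univ j)

lemma Hfun_smul_le (hp : 0 < p) (hα : 0 < α) (hβ : 0 ≤ β) (hαβ : β ≤ α * (p - 1))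
    (hP : 0 ≤ interactionEnergy p a u) {t : ℝ} (ht : t ^ 2 ≤ 1) :
    Hfun N m p α β a (t • u) ≤ Hfun N m p α β a u := by
  have hD : 0 < 2*α + ((N:ℝ) + 2)*β := by positivity
  rw [Hfun_eq (by positivity) hD.ne', Hfun_eq (by positivity) hD.ne', mass_smul,
    kineticEnergy_smul, interactionEnergy_smul]
  gcongr ?_ / _
  have hG := kineticEnergy_nonneg (u := u)
  have hM := mass_nonneg (u := u)
  have hquad : β * (2 * (t ^ 2 * kineticEnergy u) + t ^ 2 * mass u)
      ≤ β * (2 * kineticEnergy u + mass u) := by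
    rw [show 2 * (t ^ 2 * kineticEnergy u) + t ^ 2 * mass u
      = t ^ 2 * (2 * kineticEnergy u + mass u) by ring]
    exact mul_le_mul_of_nonneg_left (mul_le_of_le_one_left (by positivity) ht) hβ
  have hnonlin : (α * (p - 1) - β) / p * ((t ^ 2) ^ p * interactionEnergy p a u)
      ≤ (α * (p - 1) - β) / p * interactionEnergy p a u :=
    mul_le_mul_of_nonneg_left
      (mul_le_of_le_one_left hP (Real.rpow_le_one (sq_nonneg t) ht (by positivity)))
      (div_nonneg (by linarith) (by positivity))
  linarith

lemma exists_rpow_eq_mul {p r : ℝ} (hp : 1 < p) (hr0 : 0 < r) (hr1 : r ≤ 1) :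
    ∃ s, 0 < s ∧ s ≤ 1 ∧ s ^ p = s * r := by
  have hs : 0 < r ^ (p - 1)⁻¹ := by positivity
  refine ⟨r ^ (p - 1)⁻¹, hs, Real.rpow_le_one hr0.le hr1 (by simp only [inv_nonneg]; linarith), ?_⟩
  calc (r ^ (p - 1)⁻¹) ^ p = (r ^ (p - 1)⁻¹) ^ (1 + (p - 1)) := by ring_nf
    _ = r ^ (p - 1)⁻¹ * r := by
      rw [Real.rpow_add hs, Real.rpow_one, Real.rpow_inv_rpow hr0.le (by linarith)]

lemma Kquad_pos (hN : 2 ≤ N) (hα : 0 < α) (hβ : 0 ≤ β) (hu : InH N m p u) (hne : u ≠ 0) :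
    0 < Kquad α β u := by
  have hG := kineticEnergy_nonneg (u := u)
  have hV := potentialEnergy_nonneg (u := u)
  have hM := mass_pos hu hne
  have hN' : 0 ≤ (N:ℝ) - 2 := by rw [sub_nonneg]; exact_mod_cast hN
  unfold Kquad
  positivity

theorem exists_smul_Kfun_eq_zero_Sfun_le_Hfun (hN : 2 ≤ N) (hp : 1 < p) (hα : 0 < α)
    (hβ : 0 ≤ β) (hαβ : β ≤ α * (p - 1)) (hu : InH N m p u) (hne : u ≠ 0)
    (hK : Kfun N m p α β a u ≤ 0) :
    ∃ t : ℝ, t ≠ 0 ∧ Kfun N m p α β a (t • u) = 0 ∧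
      Sfun N m p a (t • u) ≤ Hfun N m p α β a u := by
  set c := (2*p*α + (N:ℝ)*β) / (2*p) with hc_def
  set P := interactionEnergy p a u with hP_def
  have hQ : 0 < Kquad α β u := Kquad_pos hN hα hβ hu hne
  have hQcP : Kquad α β u ≤ c * P := by rw [Kfun_eq] at hK; linarith
  have hcP : 0 < c * P := hQ.trans_le hQcP
  have hc : 0 < c := by positivity
  have hP : 0 < P := pos_of_mul_pos_right hcP hc.le
  obtain ⟨s, hs0, hs1, hsp⟩ := exists_rpow_eq_mul hp (div_pos hQ hcP) ((div_le_one hcP).2 hQcP)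
  have hKs : Kfun N m p α β a (√s • u) = 0 := by
    rw [Kfun_eq, Kquad_smul, interactionEnergy_smul, Real.sq_sqrt hs0.le, hsp, ← hc_def,
      ← hP_def]
    field_simp
    ring
  refine ⟨√s, (Real.sqrt_pos.2 hs0).ne', hKs, ?_⟩
  rw [← Hfun_eq_Sfun_of_Kfun_eq_zero hKs]
  exact Hfun_smul_le (zero_lt_one.trans hp) hα hβ hαβ hP.le (by rwa [Real.sq_sqrt hs0.le])

end CoupledNLS

open CoupledNLS in
theorem stmt_9_general (N m : ℕ) (hN : 2 ≤ N) (p α β : ℝ)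
    (hp : 1 + 2/(N:ℝ) < p)
    (hα : 0 < α) (hβ : 0 ≤ β) (hαβ : β < α * (p - 1))
    (a : Fin m → Fin m → ℝ) :
    sInf {s : ℝ | ∃ u : Fin m → EuclideanSpace ℝ (Fin N) → ℂ,
        InH N m p u ∧ u ≠ 0 ∧ Kfun N m p α β a u = 0 ∧ s = Sfun N m p a u}
      = sInf {s : ℝ | ∃ u : Fin m → EuclideanSpace ℝ (Fin N) → ℂ,
        InH N m p u ∧ u ≠ 0 ∧ Kfun N m p α β a u ≤ 0 ∧ s = Hfun N m p α β a u} := by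
  have hp1 : 1 < p := lt_of_le_of_lt (le_add_of_nonneg_right (by positivity)) hp
  apply csInf_eq_csInf_of_forall_exists_le
  · rintro _ ⟨u, hu, hne, hK, rfl⟩
    exact ⟨_, ⟨u, hu, hne, hK.le, rfl⟩, (Hfun_eq_Sfun_of_Kfun_eq_zero hK).le⟩
  · rintro _ ⟨u, hu, hne, hK, rfl⟩
    obtain ⟨t, ht, hKt, hSt⟩ :=
      exists_smul_Kfun_eq_zero_Sfun_le_Hfun hN hp1 hα hβ hαβ.le hu hne hK
    exact ⟨_, ⟨t • u, hu.smul t, smul_ne_zero ht hne, hKt, rfl⟩, hSt⟩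

/-- The minimization value `m_{α,β}` over `{K = 0}` of `S` equals the
infimum of `H_{α,β}` over `{K ≤ 0}`. -/
theorem stmt_9 (N m : ℕ) (hN : 2 ≤ N) (p α β : ℝ)
    (hp : 1 + 2/(N:ℝ) < p) (hpc : 3 ≤ N → p < (N:ℝ)/((N:ℝ) - 2))
    (hα : 0 < α) (hβ : 0 ≤ β) (hαβ : β < α * (p - 1))
    (a : Fin m → Fin m → ℝ) (ha : ∀ j k, 0 < a j k) (hsym : ∀ j k, a j k = a k j) :
    sInf {s : ℝ | ∃ u : Fin m → EuclideanSpace ℝ (Fin N) → ℂ,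
        InH N m p u ∧ u ≠ 0 ∧ Kfun N m p α β a u = 0 ∧ s = Sfun N m p a u}
      = sInf {s : ℝ | ∃ u : Fin m → EuclideanSpace ℝ (Fin N) → ℂ,
        InH N m p u ∧ u ≠ 0 ∧ Kfun N m p α β a u ≤ 0 ∧ s = Hfun N m p α β a u} :=
  stmt_9_general N m hN p α β hp hα hβ hαβ a
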